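/- arXiv:1312.5932 — 2 statements merged into one kernel-verified Lean document; each statement's English description precedes it below -/
import Mathlib

section
/- Let 𝒜 = {A_m} be a strictly convergent (A,I)-pre-Weierstrass system and let σ be an analytic 𝒜-structure on a valued field K whose valuation ring is henselian. For f = Σ_μ a_μ ξ^μ ∈ A_m, if σ_0(a_μ) = 0 for every μ ∈ ℕ^m, then σ_m(f) = 0, i.e. σ_m(f) is the zero function on (K°)^m. Consequently, σ_m factors through the image of the A-algebra homomorphism 𝒮^σ : A_m → K°[[ξ]] sending f to Σ_μ σ_0(a_μ)ξ^μ. -/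
noncomputable section
open scoped Classical
open MvPowerSeries

namespace SCW

variable {A : Type*} [CommRing A]

/-- `f` involves only the variables `ξ_1, …, ξ_m`, i.e. those with index `< m`. -/
def VarsBelow (m : ℕ) (f : MvPowerSeries ℕ A) : Prop :=
  ∀ d : ℕ →₀ ℕ, (∃ i ∈ d.support, m ≤ i) → MvPowerSeries.coeff (R := A) d f = 0

/-- The coefficient series `f̄_μ` of `(ξ'')^μ` when `f` is written as a series in the
variables of index `≥ m` with coefficients that are series in the variables of index `< m`. -/
def sliceA (m : ℕ) (μ : ℕ →₀ ℕ) (f : MvPowerSeries ℕ A) : MvPowerSeries ℕ A :=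
  fun d => if (∀ i ∈ d.support, i < m) then MvPowerSeries.coeff (R := A) (d + μ) f else 0

/-- The action of a permutation of the variables on a power series. -/
def permuteA (e : Equiv.Perm ℕ) (f : MvPowerSeries ℕ A) : MvPowerSeries ℕ A :=
  fun d => MvPowerSeries.coeff (R := A) (Finsupp.equivMapDomain e d) f

/-- Coefficientwise reduction modulo the ideal `I`. -/
def red (I : Ideal A) : MvPowerSeries ℕ A → MvPowerSeries ℕ (A ⧸ I) :=
  MvPowerSeries.map (σ := ℕ) (Ideal.Quotient.mk I)

/-- `f` is (equal to) a polynomial in the variables of index `< m`. -/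
def IsPolyBelow {R : Type*} [CommRing R] (m : ℕ) (f : MvPowerSeries ℕ R) : Prop :=
  ∃ p : MvPolynomial ℕ R, (∀ i ∈ p.vars, i < m) ∧ f = ↑p

/-- A family `{A_m}` of subalgebras `A[ξ_1,…,ξ_m] ⊆ A_m ⊆ A_{m'} ⊆ A[[ξ_1,…,ξ_{m'}]]`
(`m ≤ m'`), closed under permutations of the variables, satisfying condition (*)
(coefficients of `f ∈ A_{m'}` as a series in `ξ_{m+1},…,ξ_{m'}` lie in `A_m`) and condition (**)
(the image of `A_m` under reduction mod `I` is the polynomial ring `(A/I)[ξ_1,…,ξ_m]`). -/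
structure SCFamily (A : Type u) [CommRing A] (I : Ideal A) : Type u where
  Am : ℕ → Subalgebra A (MvPowerSeries ℕ A)
  mono : ∀ {m m' : ℕ}, m ≤ m' → Am m ≤ Am m'
  varsBelow : ∀ m, ∀ f ∈ Am m, VarsBelow m f
  poly_mem : ∀ m (p : MvPolynomial ℕ A), (∀ i ∈ p.vars, i < m) →
    (↑p : MvPowerSeries ℕ A) ∈ Am m
  perm_closed : ∀ m (e : Equiv.Perm ℕ), (∀ i, m ≤ i → e i = i) →
    ∀ f ∈ Am m, permuteA e f ∈ Am m
  slice_mem : ∀ {m m' : ℕ}, m ≤ m' → ∀ μ : ℕ →₀ ℕ, (∀ i ∈ μ.support, m ≤ i) →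
    ∀ f ∈ Am m', sliceA m μ f ∈ Am m
  red_poly : ∀ m, ∀ f ∈ Am m, IsPolyBelow m (red I f)
  poly_lift : ∀ m (q : MvPolynomial ℕ (A ⧸ I)), (∀ i ∈ q.vars, i < m) →
    ∃ f ∈ Am m, red I f = ↑q

/-- `f ∈ A[[ξ_1,…,ξ_m]]` is regular in `ξ_m` of degree `d`: its reduction `f̃` mod `I` is a
monic polynomial in `ξ_m` of degree `d` with coefficients in `(A/I)[ξ_1,…,ξ_{m-1}]`. -/
def SCRegular (I : Ideal A) (m d : ℕ) (f : MvPowerSeries ℕ A) : Prop :=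
  ∃ c : Fin d → MvPolynomial ℕ (A ⧸ I), (∀ i, ∀ j ∈ (c i).vars, j < m - 1) ∧
    red I f = ↑((MvPolynomial.X (m - 1) : MvPolynomial ℕ (A ⧸ I)) ^ d
      + ∑ i : Fin d, c i * (MvPolynomial.X (m - 1)) ^ (i : ℕ))

/-- Weierstrass preparation for the family `{A_m}`: every `f ∈ A_m` regular in `ξ_m` of
degree `d` factors uniquely as a unit of `A_m` times a monic (Weierstrass) polynomial of degree
`d` in `ξ_m` with lower coefficients in `A_{m-1}`. -/
def HasWP {A : Type u} [CommRing A] {I : Ideal A} (𝒜 : SCFamily A I) : Prop :=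
  ∀ d m : ℕ, 1 ≤ m → ∀ f ∈ 𝒜.Am m, SCRegular I m d f →
    ∃! ur : MvPowerSeries ℕ A × (Fin d → MvPowerSeries ℕ A),
      ur.1 ∈ 𝒜.Am m ∧ (∃ v ∈ 𝒜.Am m, ur.1 * v = 1) ∧ (∀ i, ur.2 i ∈ 𝒜.Am (m - 1)) ∧
      f = ur.1 * ((MvPowerSeries.X (m - 1)) ^ d
        + ∑ i : Fin d, ur.2 i * (MvPowerSeries.X (m - 1)) ^ (i : ℕ))


/-- An analytic `𝒜`-structure on a valued field `L` with valuation ring `O`: a system of ring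
homomorphisms `σ_m : A_m → Fun((O)^m, O)` with `I ⊆ σ_0⁻¹(L°°)`, sending `ξ_i` to the `i`-th
coordinate function, with `σ_{m+1}` extending `σ_m`. -/
structure AnalyticStructure {A : Type u} [CommRing A] (I : Ideal A)
    (Am : ℕ → Subalgebra A (MvPowerSeries ℕ A))
    (L : Type v) [Field L] (O : ValuationSubring L) : Type (max u v) where
  σ : (m : ℕ) → ↥(Am m) →+* ((Fin m → ↥O) → ↥O)
  cond1 : ∀ a ∈ I, ∀ (h : (MvPowerSeries.C (σ := ℕ) (R := A) a) ∈ Am 0) (x : Fin 0 → ↥O),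
    σ 0 ⟨MvPowerSeries.C (σ := ℕ) (R := A) a, h⟩ x ∈ IsLocalRing.maximalIdeal ↥O
  cond2 : ∀ (m i : ℕ) (hi : i < m) (h : (MvPowerSeries.X i : MvPowerSeries ℕ A) ∈ Am m)
      (x : Fin m → ↥O), σ m ⟨MvPowerSeries.X i, h⟩ x = x ⟨i, hi⟩
  cond3 : ∀ (m : ℕ) (f : MvPowerSeries ℕ A) (hf : f ∈ Am m) (hf' : f ∈ Am (m + 1))
      (x : Fin (m + 1) → ↥O), σ (m + 1) ⟨f, hf'⟩ x = σ m ⟨f, hf⟩ (x ∘ Fin.castSucc)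

/-- A strictly convergent `(A,I)`-pre-Weierstrass system: a system `{A_m}` (conditions
(i)–(v)), together with Weierstrass preparation (vi), the weak Noetherian property (vii),
and the faithfulness condition (viii). -/
structure SCPreWS (A : Type u) [CommRing A] (I : Ideal A) extends SCFamily A I where
  wprep : HasWP toSCFamily
  wnp : ∀ m, ∀ f ∈ Am m, ∃ J : Finset (ℕ →₀ ℕ), ∃ g : (ℕ →₀ ℕ) → MvPowerSeries ℕ A,
    (∀ μ ∈ J, g μ ∈ Am m ∧ red I (g μ) = 0) ∧
    f = ∑ μ ∈ J, (MvPowerSeries.monomial (R := A) μ (MvPowerSeries.coeff (R := A) μ f)) * (1 + g μ)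
  faithful : ∀ a : A,
    (∀ (L : Type u) [Field L] (O : ValuationSubring L)
      (τ : AnalyticStructure I Am L O) (h : MvPowerSeries.C (σ := ℕ) (R := A) a ∈ Am 0),
      τ.σ 0 ⟨MvPowerSeries.C (σ := ℕ) (R := A) a, h⟩ = 0) → a = 0

/-- `f` lies in the ideal of the subring (with underlying set `T`) generated by the set `S`:
it is a finite combination `Σ cᵢ·gᵢ` with `cᵢ ∈ T` and `gᵢ ∈ S`. -/
def memSpan {R : Type*} [CommRing R] (T S : Set R) (f : R) : Prop :=
  ∃ (k : ℕ) (c g : Fin k → R), (∀ i, c i ∈ T) ∧ (∀ i, g i ∈ S) ∧ f = ∑ i, c i * g i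

/-- The set of constant power series with constant in `I`. -/
def constsOf {A : Type*} [CommRing A] (I : Ideal A) : Set (MvPowerSeries ℕ A) :=
  {f | ∃ a ∈ I, f = MvPowerSeries.C (σ := ℕ) (R := A) a}

/-- The set of variables with index in `[lo, hi)`. -/
def varsIn (A : Type*) [CommRing A] (lo hi : ℕ) : Set (MvPowerSeries ℕ A) :=
  {f | ∃ j : ℕ, lo ≤ j ∧ j < hi ∧ f = MvPowerSeries.X j}

/-- The set of products of two variables with indices in `[lo, hi)`. -/
def varsPairsIn (A : Type*) [CommRing A] (lo hi : ℕ) : Set (MvPowerSeries ℕ A) :=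
  {f | ∃ j k : ℕ, lo ≤ j ∧ j < hi ∧ lo ≤ k ∧ k < hi ∧
    f = MvPowerSeries.X j * MvPowerSeries.X k}

/- Convention for a henselian system over `(ξ,ρ)` with unknowns `(η,λ)`:
within `A_{m+M,n+N} = A_{m+M+n+N}`, the variable `ξ_{i+1}` has index `i` (`i < m`),
`η_{i+1}` has index `m+i` (`i < M`), `ρ_{j+1}` has index `m+M+j` (`j < n`), and
`λ_{j+1}` has index `m+M+n+j` (`j < N`). -/

/-- A henselian system `Σ` for the unknowns `(η,λ)` over `(ξ,ρ)`:
`η_i = b_{0,i}(ξ,ρ) + b_{1,i}(ξ,ρ,η,λ)` and `λ_j = c_{0,j}(ξ,ρ) + c_{1,j}(ξ,ρ,η,λ)` where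
`b_{0,i} ∈ A[ξ,ρ]`, `b_{1,i} ∈ (I,ρ,λ)A_{m+M,n+N}`, `c_{0,j} ∈ (ρ)A[ξ,ρ]` and
`c_{1,j} ∈ (I,ρ,λ²)A_{m+M,n+N}`. -/
structure HenselSys {A : Type u} [CommRing A] {I : Ideal A} (𝒜 : SCFamily A I)
    (m n M N : ℕ) where
  b0 : Fin M → MvPolynomial ℕ A
  b1 : Fin M → MvPowerSeries ℕ A
  c0 : Fin N → MvPolynomial ℕ A
  c1 : Fin N → MvPowerSeries ℕ A
  b0_vars : ∀ i, ∀ v ∈ (b0 i).vars, v < m ∨ (m + M ≤ v ∧ v < m + M + n)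
  c0_div : ∀ j, ∃ q : Fin n → MvPolynomial ℕ A,
    (∀ k, ∀ v ∈ (q k).vars, v < m ∨ (m + M ≤ v ∧ v < m + M + n)) ∧
    c0 j = ∑ k : Fin n, MvPolynomial.X (m + M + (k : ℕ)) * q k
  b1_mem : ∀ i, memSpan (𝒜.Am (m + M + n + N) : Set (MvPowerSeries ℕ A))
    (constsOf I ∪ varsIn A (m + M) (m + M + n + N)) (b1 i)
  c1_mem : ∀ j, memSpan (𝒜.Am (m + M + n + N) : Set (MvPowerSeries ℕ A))
    (constsOf I ∪ varsIn A (m + M) (m + M + n) ∪ varsPairsIn A (m + M + n) (m + M + n + N))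
    (c1 j)

/-- The `M + N` generators of the ideal `I_Σ` of a henselian system. -/
def HenselSys.gens {A : Type u} [CommRing A] {I : Ideal A} {𝒜 : SCFamily A I}
    {m n M N : ℕ} (S : HenselSys 𝒜 m n M N) : Fin M ⊕ Fin N → MvPowerSeries ℕ A :=
  Sum.elim
    (fun i => MvPowerSeries.X (m + (i : ℕ)) - (↑(S.b0 i) : MvPowerSeries ℕ A) - S.b1 i)
    (fun j => MvPowerSeries.X (m + M + n + (j : ℕ)) - (↑(S.c0 j) : MvPowerSeries ℕ A) - S.c1 j)

/-- `Σ` is a polynomial henselian system: all generators of `I_Σ` are polynomials. -/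
def HenselSys.IsPolynomial {A : Type u} [CommRing A] {I : Ideal A} {𝒜 : SCFamily A I}
    {m n M N : ℕ} (S : HenselSys 𝒜 m n M N) : Prop :=
  (∀ i, ∃ p : MvPolynomial ℕ A, S.b1 i = ↑p) ∧ (∀ j, ∃ p : MvPolynomial ℕ A, S.c1 j = ↑p)

/-- The total degree of the exponent `d` in the variables of index `≥ t`. -/
def rhoDeg (t : ℕ) (d : ℕ →₀ ℕ) : ℕ := ∑ i ∈ d.support, if t ≤ i then d i else 0

/-- Truncation of `f` keeping the monomials of degree `< k` in the variables of index `≥ t`. -/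
def rhoTrunc (t k : ℕ) (f : MvPowerSeries ℕ A) : MvPowerSeries ℕ A :=
  fun d => if rhoDeg t d < k then MvPowerSeries.coeff (R := A) d f else 0

/-- `h ∈ A_m[[ρ]]`: `h` only involves the variables `ξ` (indices `< m`) and `ρ`
(indices in `[m+M, m+M+n)`), and all its coefficients, as a series in `ρ` (and the remaining
variables), lie in `A_m`. -/
def MemAmRho {A : Type u} [CommRing A] {I : Ideal A} (𝒜 : SCFamily A I)
    (m M n : ℕ) (h : MvPowerSeries ℕ A) : Prop :=
  (∀ d : ℕ →₀ ℕ, (∃ i ∈ d.support, ¬ (i < m ∨ (m + M ≤ i ∧ i < m + M + n))) →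
    MvPowerSeries.coeff (R := A) d h = 0) ∧
  ∀ μ : ℕ →₀ ℕ, sliceA m μ h ∈ 𝒜.Am m

/-- The index (in `A_{m+M+n+N}`) of the unknown `η_i` resp. `λ_j`. -/
def etaLamIdx (m n M N : ℕ) : Fin M ⊕ Fin N → ℕ :=
  Sum.elim (fun i => m + (i : ℕ)) (fun j => m + M + n + (j : ℕ))

/-- The generating set used at step `k`: the series `η_s − p_{k,s}` (where `p_k` is the tuple
of `ρ`-degree `< k` truncations of `h`) together with the monomials of degree `k` in `ρ`
(generating the `k`-th power of the ideal `(ρ_1,…,ρ_n)`). -/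
def stepGens {A : Type u} [CommRing A] (m n M N : ℕ)
    (h : Fin M ⊕ Fin N → MvPowerSeries ℕ A) (k : ℕ) : Set (MvPowerSeries ℕ A) :=
  (Set.range fun s : Fin M ⊕ Fin N =>
    MvPowerSeries.X (etaLamIdx m n M N s) - rhoTrunc m k (h s)) ∪
  {f | ∃ μ : ℕ →₀ ℕ, (∀ i ∈ μ.support, m + M ≤ i ∧ i < m + M + n) ∧
    (∑ i ∈ μ.support, μ i) = k ∧ f = MvPowerSeries.monomial (R := A) μ 1}

/-- `h` is a power series solution of the henselian system `S`. -/
def IsSolution {A : Type u} [CommRing A] {I : Ideal A} {𝒜 : SCFamily A I}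
    {m n M N : ℕ} (S : HenselSys 𝒜 m n M N)
    (h : Fin M ⊕ Fin N → MvPowerSeries ℕ A) : Prop :=
  (∀ s, MemAmRho 𝒜 m M n (h s)) ∧
  ∀ k : ℕ, 1 ≤ k → ∀ s, memSpan (𝒜.Am (m + M + n + N) : Set (MvPowerSeries ℕ A))
    (stepGens m n M N h k) (S.gens s)

/-- `r` is the composition `g(ξ,ρ,h(ξ,ρ))` of `g` with the solution `h` of the system `S`. -/
def IsComp {A : Type u} [CommRing A] {I : Ideal A} {𝒜 : SCFamily A I}
    {m n M N : ℕ} (S : HenselSys 𝒜 m n M N)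
    (h : Fin M ⊕ Fin N → MvPowerSeries ℕ A) (g r : MvPowerSeries ℕ A) : Prop :=
  MemAmRho 𝒜 m M n r ∧
  ∀ k : ℕ, 1 ≤ k → memSpan (𝒜.Am (m + M + n + N) : Set (MvPowerSeries ℕ A))
    (stepGens m n M N h k) (g - rhoTrunc m k r)

/-- Reindexing a one-kind power series in the variables `ξ` (indices `< m`) and `ρ`
(indices in `[m+gap, ∞)`) as a two-kinds power series, `ξ_i ↦ inl i`, `ρ_j ↦ inr j`. -/
def toSep {A : Type*} [CommRing A] (m gap : ℕ) (f : MvPowerSeries ℕ A) :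
    MvPowerSeries (ℕ ⊕ ℕ) A :=
  fun e => if (∀ i : ℕ, m ≤ i → e (Sum.inl i) = 0)
    then MvPowerSeries.coeff (R := A)
      (Finsupp.mapDomain (Sum.elim id (fun j => m + gap + j)) e) f
    else 0

/-- The ring `A^H_{m,n} ⊆ A[[ξ,ρ]]` of all compositions `g(ξ,ρ,h_Σ(ξ,ρ))` where `Σ` is a
henselian system for `(η,λ)` over `(ξ,ρ)`, `h_Σ` its power series solution, and
`g ∈ A_{m+M,n+N}`. -/
def AH {A : Type u} [CommRing A] {I : Ideal A} (𝒜 : SCFamily A I) (m n : ℕ) :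
    Set (MvPowerSeries (ℕ ⊕ ℕ) A) :=
  {F | ∃ (M N : ℕ) (S : HenselSys 𝒜 m n M N) (h : Fin M ⊕ Fin N → MvPowerSeries ℕ A)
    (g r : MvPowerSeries ℕ A), IsSolution S h ∧ g ∈ 𝒜.Am (m + M + n + N) ∧
    IsComp S h g r ∧ F = toSep m M r}

/-- As `AH`, but using only polynomial henselian systems. -/
def AHpoly {A : Type u} [CommRing A] {I : Ideal A} (𝒜 : SCFamily A I) (m n : ℕ) :
    Set (MvPowerSeries (ℕ ⊕ ℕ) A) :=
  {F | ∃ (M N : ℕ) (S : HenselSys 𝒜 m n M N) (h : Fin M ⊕ Fin N → MvPowerSeries ℕ A)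
    (g r : MvPowerSeries ℕ A), S.IsPolynomial ∧ IsSolution S h ∧ g ∈ 𝒜.Am (m + M + n + N) ∧
    IsComp S h g r ∧ F = toSep m M r}

/-- `f` involves only the `ξ`-variables of index `< k`. -/
def OnlyXiBelow {A : Type*} [CommRing A] (k : ℕ) (f : MvPowerSeries (ℕ ⊕ ℕ) A) : Prop :=
  ∀ d : (ℕ ⊕ ℕ) →₀ ℕ, (∃ v ∈ d.support, ¬ ∃ i : ℕ, i < k ∧ v = Sum.inl i) →
    MvPowerSeries.coeff (R := A) d f = 0

/-- Separated regularity in `ξ_m` of degree `d` for `f ∈ A[[ξ,ρ]]` : `f` is congruent to a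
monic polynomial in `ξ_m` of degree `d`, modulo the ideal `J + (ρ)A[[ξ,ρ]]` where `J` is the
ideal of series all of whose coefficients lie in `I`. -/
def RegXiH {A : Type*} [CommRing A] (I : Ideal A) (m d : ℕ)
    (f : MvPowerSeries (ℕ ⊕ ℕ) A) : Prop :=
  ∃ c : Fin d → MvPowerSeries (ℕ ⊕ ℕ) A, (∀ i, OnlyXiBelow (m - 1) (c i)) ∧
    ∀ e : (ℕ ⊕ ℕ) →₀ ℕ, (∀ j : ℕ, e (Sum.inr j) = 0) →
      MvPowerSeries.coeff (R := A) e
        (f - ((MvPowerSeries.X (Sum.inl (m - 1))) ^ d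
          + ∑ i : Fin d, c i * (MvPowerSeries.X (Sum.inl (m - 1))) ^ (i : ℕ))) ∈ I

/-- Separated regularity in `ρ_n` of degree `d` for `f ∈ A[[ξ,ρ]]` : `f ≡ ρ_n^d` modulo the
ideal `J + (ρ_1,…,ρ_{n-1},ρ_n^{d+1})A[[ξ,ρ]]`. -/
def RegRhoH {A : Type*} [CommRing A] (I : Ideal A) (n d : ℕ)
    (f : MvPowerSeries (ℕ ⊕ ℕ) A) : Prop :=
  ∀ e : (ℕ ⊕ ℕ) →₀ ℕ, (∀ j : ℕ, j ≠ n - 1 → e (Sum.inr j) = 0) →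
    e (Sum.inr (n - 1)) ≤ d →
    MvPowerSeries.coeff (R := A) e (f - (MvPowerSeries.X (Sum.inr (n - 1))) ^ d) ∈ I


/-- `varOK m n v` says that the two-kinds variable `v` is one of `ξ_1,…,ξ_m,ρ_1,…,ρ_n`. -/
def varOK (m n : ℕ) : ℕ ⊕ ℕ → Prop := Sum.elim (· < m) (· < n)

/-- The action of a permutation of the variables on a separated power series. -/
def permute2 {A : Type*} [CommRing A] (e : Equiv.Perm (ℕ ⊕ ℕ))
    (f : MvPowerSeries (ℕ ⊕ ℕ) A) : MvPowerSeries (ℕ ⊕ ℕ) A :=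
  fun d => MvPowerSeries.coeff (R := A) (Finsupp.equivMapDomain e d) f

/-- Coefficientwise reduction modulo the ideal `I`, two-kinds version. -/
def red2 {A : Type*} [CommRing A] (I : Ideal A) :
    MvPowerSeries (ℕ ⊕ ℕ) A → MvPowerSeries (ℕ ⊕ ℕ) (A ⧸ I) :=
  MvPowerSeries.map (σ := ℕ ⊕ ℕ) (Ideal.Quotient.mk I)

/-- The coefficient series `f̄_{μν}` of `(ξ'')^μ(ρ'')^ν` when `f` is written as a series in the
variables `ξ_i (i > m), ρ_j (j > n)` with coefficients series in `ξ_1,…,ξ_m,ρ_1,…,ρ_n`. -/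
def slice2 {A : Type*} [CommRing A] (m n : ℕ) (μ : (ℕ ⊕ ℕ) →₀ ℕ)
    (f : MvPowerSeries (ℕ ⊕ ℕ) A) : MvPowerSeries (ℕ ⊕ ℕ) A :=
  fun d => if (∀ v ∈ d.support, varOK m n v) then MvPowerSeries.coeff (R := A) (d + μ) f else 0

/-- The coefficient (a series in `ξ` only) of `ρ^μ` in `f`, viewing `f ∈ R[[ξ]][[ρ]]`. -/
def sliceRho {R : Type*} [CommRing R] (μ : ℕ →₀ ℕ) (f : MvPowerSeries (ℕ ⊕ ℕ) R) :
    MvPowerSeries (ℕ ⊕ ℕ) R :=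
  fun d => if (∀ j : ℕ, d (Sum.inr j) = 0)
    then MvPowerSeries.coeff (R := R) (d + μ.mapDomain Sum.inr) f else 0

/-- `f` is (equal to) a polynomial in the `ξ`-variables only. -/
def IsPolyXi {R : Type*} [CommRing R] (f : MvPowerSeries (ℕ ⊕ ℕ) R) : Prop :=
  ∃ p : MvPolynomial (ℕ ⊕ ℕ) R, (∀ v ∈ p.vars, ∃ i : ℕ, v = Sum.inl i) ∧ f = ↑p

/-- The set of constant two-kinds power series with constant in `I`. -/
def constsOf2 {A : Type*} [CommRing A] (I : Ideal A) : Set (MvPowerSeries (ℕ ⊕ ℕ) A) :=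
  {f | ∃ a ∈ I, f = MvPowerSeries.C (σ := ℕ ⊕ ℕ) (R := A) a}

/-- The set of `ξ`-variables `ξ_1,…,ξ_m`. -/
def xiVarsBelow (A : Type*) [CommRing A] (m : ℕ) : Set (MvPowerSeries (ℕ ⊕ ℕ) A) :=
  {f | ∃ i : ℕ, i < m ∧ f = MvPowerSeries.X (Sum.inl i)}

/-- The set of `ρ`-variables `ρ_1,…,ρ_n`. -/
def rhoVarsBelow (A : Type*) [CommRing A] (n : ℕ) : Set (MvPowerSeries (ℕ ⊕ ℕ) A) :=
  {f | ∃ j : ℕ, j < n ∧ f = MvPowerSeries.X (Sum.inr j)}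

/-- The formal partial derivative `∂f/∂ξ_{i+1}` of a power series. -/
def pder {A : Type*} [CommRing A] (i : ℕ) (f : MvPowerSeries ℕ A) : MvPowerSeries ℕ A :=
  fun d => ((d i + 1 : ℕ) : A) * MvPowerSeries.coeff (R := A) (d + Finsupp.single i 1) f

/-- Assembling a point of `(K°)^m × (K°)^M × (K°)^n × (K°)^N` into a point of
`(K°)^{m+M+n+N}`, following the index conventions of a henselian system. -/
def assemble {α : Type*} (m M n N : ℕ) (x : Fin m → α) (y : Fin M → α)
    (r : Fin n → α) (z : Fin N → α) : Fin (m + M + n + N) → α :=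
  fun i => if h1 : (i : ℕ) < m then x ⟨i, h1⟩
    else if h2 : (i : ℕ) < m + M then y ⟨(i : ℕ) - m, by omega⟩
    else if h3 : (i : ℕ) < m + M + n then r ⟨(i : ℕ) - (m + M), by omega⟩
    else z ⟨(i : ℕ) - (m + M + n), by have := i.isLt; omega⟩

/-- Goodness of a strictly convergent pre-Weierstrass system: whenever a composition
`F(ξ,ρ,h_Σ(ξ,ρ))` vanishes, `F` lies in `I_Σ · (A_{m+M,n+N})_{1+(I,ρ,λ)}`, i.e. `(1+w)·F ∈ I_Σ`
for some `w ∈ (I,ρ,λ)A_{m+M,n+N}`. -/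
def IsGood {A : Type u} [CommRing A] {I : Ideal A} (𝒜 : SCFamily A I) : Prop :=
  ∀ (m n M N : ℕ) (S : HenselSys 𝒜 m n M N) (h : Fin M ⊕ Fin N → MvPowerSeries ℕ A)
    (F : MvPowerSeries ℕ A), IsSolution S h → F ∈ 𝒜.Am (m + M + n + N) →
    IsComp S h F 0 →
    ∃ w : MvPowerSeries ℕ A,
      memSpan (𝒜.Am (m + M + n + N) : Set (MvPowerSeries ℕ A))
        (constsOf I ∪ varsIn A (m + M) (m + M + n + N)) w ∧
      memSpan (𝒜.Am (m + M + n + N) : Set (MvPowerSeries ℕ A))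
        (Set.range S.gens) ((1 + w) * F)

/-- The `I`-adic completion of `A[ξ_1,…,ξ_m]` inside `A[[ξ_1,…,ξ_m]]`: the series such that,
for every `k`, all but finitely many coefficients lie in `I^k`. -/
def AdicAm (A : Type u) [CommRing A] (I : Ideal A) (m : ℕ) : Set (MvPowerSeries ℕ A) :=
  {f | VarsBelow m f ∧ ∀ k : ℕ, 1 ≤ k →
    {d : ℕ →₀ ℕ | MvPowerSeries.coeff (R := A) d f ∉ I ^ k}.Finite}

/-- The ring `T_m(K)° = K°⟨ξ_1,…,ξ_m⟩` of strictly convergent power series over the valuation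
ring `O = K°` of `K`: power series with coefficients in `K°` tending to `0`. -/
def TateAm {K : Type u} [Field K] (v : AbsoluteValue K ℝ) (O : Subring K) (m : ℕ) :
    Set (MvPowerSeries ℕ ↥O) :=
  {f | VarsBelow m f ∧ ∀ ε : ℝ, 0 < ε →
    {d : ℕ →₀ ℕ | ε ≤ v ((MvPowerSeries.coeff (R := ↥O) d f : ↥O) : K)}.Finite}

end SCW

namespace SCW

variable {A : Type*} [CommRing A] {I : Ideal A}

theorem SCFamily.C_mem (𝒜 : SCFamily A I) (m : ℕ) (a : A) :
    MvPowerSeries.C (σ := ℕ) a ∈ 𝒜.Am m := by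
  rw [MvPowerSeries.c_eq_algebraMap]
  exact (𝒜.Am m).algebraMap_mem a

theorem SCFamily.monomial_one_mem_of_coeff_ne_zero (𝒜 : SCFamily A I) {m : ℕ}
    {f : MvPowerSeries ℕ A} (hf : f ∈ 𝒜.Am m) {μ : ℕ →₀ ℕ} (hμ : coeff μ f ≠ 0) :
    MvPowerSeries.monomial μ (1 : A) ∈ 𝒜.Am m := by
  rw [← MvPolynomial.coe_monomial]
  refine 𝒜.poly_mem m _ fun i hi => ?_
  obtain ⟨d, hd, hid⟩ := (MvPolynomial.mem_vars_iff_mem_support i).mp hi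
  rw [Finset.mem_singleton.mp (MvPolynomial.support_monomial_subset hd)] at hid
  by_contra hlt
  exact hμ (𝒜.varsBelow m f hf μ ⟨i, hid, not_lt.mp hlt⟩)

section

variable {R T : Type*} [CommRing R] [Algebra A R] [Ring T] {B : Subalgebra A R}

theorem exists_mem_map_mul_eq_zero (φ : B →+* T) {r s : R} (hr : r ∈ B) (hs : s ∈ B)
    (hr0 : φ ⟨r, hr⟩ = 0) : ∃ h : r * s ∈ B, φ ⟨r * s, h⟩ = 0 :=
  ⟨mul_mem hr hs, by
    rw [show (⟨r * s, mul_mem hr hs⟩ : B) = ⟨r, hr⟩ * ⟨s, hs⟩ from rfl, map_mul, hr0, zero_mul]⟩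

theorem exists_mem_map_sum_eq_zero (φ : B →+* T) {ι : Type*} (s : Finset ι) (t : ι → R)
    (ht : ∀ i ∈ s, ∃ h : t i ∈ B, φ ⟨t i, h⟩ = 0) :
    ∃ h : ∑ i ∈ s, t i ∈ B, φ ⟨∑ i ∈ s, t i, h⟩ = 0 := by
  classical
  induction s using Finset.induction_on with
  | empty => exact ⟨zero_mem B, map_zero φ⟩
  | insert i s hi ih =>
    obtain ⟨hti, hti0⟩ := ht i (Finset.mem_insert_self i s)
    obtain ⟨hs, hs0⟩ := ih fun j hj => ht j (Finset.mem_insert_of_mem hj)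
    simp only [Finset.sum_insert hi]
    refine ⟨add_mem hti hs, ?_⟩
    rw [show (⟨t i + ∑ j ∈ s, t j, add_mem hti hs⟩ : B) = ⟨t i, hti⟩ + ⟨_, hs⟩ from rfl,
      map_add, hti0, hs0, add_zero]

end

variable {K : Type*} [Field K] {O : ValuationSubring K}

theorem AnalyticStructure.σ_apply_of_mem_zero {𝒜 : SCFamily A I}
    (τ : AnalyticStructure I 𝒜.Am K O) {f : MvPowerSeries ℕ A} (h0 : f ∈ 𝒜.Am 0) :
    ∀ (m : ℕ) (hm : f ∈ 𝒜.Am m) (x : Fin m → O), τ.σ m ⟨f, hm⟩ x = τ.σ 0 ⟨f, h0⟩ Fin.elim0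
  | 0, _, x => congrArg _ (funext fun i => i.elim0)
  | k + 1, hm, x => by
    rw [τ.cond3 k f (𝒜.mono (Nat.zero_le k) h0) hm x]
    exact τ.σ_apply_of_mem_zero h0 k _ _

theorem AnalyticStructure.σ_C_eq_zero {𝒜 : SCFamily A I} (τ : AnalyticStructure I 𝒜.Am K O)
    {a : A} (ha : τ.σ 0 ⟨MvPowerSeries.C a, 𝒜.C_mem 0 a⟩ = 0) (m : ℕ) :
    τ.σ m ⟨MvPowerSeries.C a, 𝒜.C_mem m a⟩ = 0 :=
  funext fun x => by rw [τ.σ_apply_of_mem_zero (𝒜.C_mem 0 a), ha]; rfl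

/-- By the weak Noetherian property `f = ∑_{μ ∈ J} a_μ ξ^μ (1 + g_μ)` is a finite combination
of elements of `A_m` with coefficients `a_μ`, and `σ_m(a_μ) = σ_0(a_μ) = 0`. -/
theorem AnalyticStructure.σ_eq_zero_of_σ_coeff_eq_zero (𝒜 : SCPreWS A I)
    (τ : AnalyticStructure I 𝒜.Am K O) {m : ℕ} {f : MvPowerSeries ℕ A} (hf : f ∈ 𝒜.Am m)
    (hcoeff : ∀ μ, τ.σ 0 ⟨MvPowerSeries.C (coeff μ f), 𝒜.C_mem 0 _⟩ = 0) :
    τ.σ m ⟨f, hf⟩ = 0 := by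
  obtain ⟨J, g, hg, hfJ⟩ := 𝒜.wnp m f hf
  have hterm : ∀ μ ∈ J, ∃ h : MvPowerSeries.monomial μ (coeff μ f) * (1 + g μ) ∈ 𝒜.Am m,
      τ.σ m ⟨_, h⟩ = 0 := by
    intro μ hμ
    by_cases hμf : coeff μ f = 0
    · simp only [hμf, map_zero, zero_mul]
      exact ⟨zero_mem _, map_zero _⟩
    · have hmon := 𝒜.monomial_one_mem_of_coeff_ne_zero hf hμf
      rw [show MvPowerSeries.monomial μ (coeff μ f) =
          MvPowerSeries.C (coeff μ f) * MvPowerSeries.monomial μ 1 by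
        rw [← MvPowerSeries.monomial_zero_eq_C_apply, MvPowerSeries.monomial_mul_monomial,
          zero_add, mul_one], mul_assoc]
      exact exists_mem_map_mul_eq_zero _ _ (mul_mem hmon (add_mem (one_mem _) (hg μ hμ).1))
        (τ.σ_C_eq_zero (hcoeff μ) m)
  obtain ⟨_, hsum⟩ := exists_mem_map_sum_eq_zero (τ.σ m) J _ hterm
  simpa only [← hfJ] using hsum

theorem AnalyticStructure.σ_eq_of_σ_coeff_eq (𝒜 : SCPreWS A I)
    (τ : AnalyticStructure I 𝒜.Am K O) {m : ℕ} {f g : MvPowerSeries ℕ A} (hf : f ∈ 𝒜.Am m)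
    (hg : g ∈ 𝒜.Am m)
    (hcoeff : ∀ μ, τ.σ 0 ⟨MvPowerSeries.C (coeff μ f), 𝒜.C_mem 0 _⟩ =
      τ.σ 0 ⟨MvPowerSeries.C (coeff μ g), 𝒜.C_mem 0 _⟩) :
    τ.σ m ⟨f, hf⟩ = τ.σ m ⟨g, hg⟩ := by
  have hsub := τ.σ_eq_zero_of_σ_coeff_eq_zero 𝒜 (sub_mem hf hg) fun μ => by
    rw [show (⟨MvPowerSeries.C (coeff μ (f - g)), 𝒜.C_mem 0 _⟩ : 𝒜.Am 0) =
        ⟨MvPowerSeries.C (coeff μ f), 𝒜.C_mem 0 _⟩ - ⟨MvPowerSeries.C (coeff μ g), 𝒜.C_mem 0 _⟩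
        from Subtype.ext (by simp only [map_sub, AddSubgroupClass.coe_sub]),
      map_sub, hcoeff μ, sub_self]
  rwa [show (⟨f - g, sub_mem hf hg⟩ : 𝒜.Am m) = ⟨f, hf⟩ - ⟨g, hg⟩ from rfl, map_sub,
    sub_eq_zero] at hsub

end SCW

open SCW in
theorem stmt12_general {A : Type u} [CommRing A] (I : Ideal A) (𝒜 : SCPreWS A I)
    (K : Type u) [Field K] (O : ValuationSubring K)
    (τ : AnalyticStructure I 𝒜.toSCFamily.Am K O) (m : ℕ) :
    (∀ (f : MvPowerSeries ℕ A) (hf : f ∈ 𝒜.Am m),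
      (∀ (μ : ℕ →₀ ℕ) (h : MvPowerSeries.C (σ := ℕ) (R := A) (MvPowerSeries.coeff (R := A) μ f) ∈ 𝒜.Am 0),
        τ.σ 0 ⟨MvPowerSeries.C (σ := ℕ) (R := A) (MvPowerSeries.coeff (R := A) μ f), h⟩ = 0) →
      τ.σ m ⟨f, hf⟩ = 0) ∧
    (∀ (f g : MvPowerSeries ℕ A) (hf : f ∈ 𝒜.Am m) (hg : g ∈ 𝒜.Am m),
      (∀ (μ : ℕ →₀ ℕ)
        (h1 : MvPowerSeries.C (σ := ℕ) (R := A) (MvPowerSeries.coeff (R := A) μ f) ∈ 𝒜.Am 0)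
        (h2 : MvPowerSeries.C (σ := ℕ) (R := A) (MvPowerSeries.coeff (R := A) μ g) ∈ 𝒜.Am 0),
        τ.σ 0 ⟨MvPowerSeries.C (σ := ℕ) (R := A) (MvPowerSeries.coeff (R := A) μ f), h1⟩ =
        τ.σ 0 ⟨MvPowerSeries.C (σ := ℕ) (R := A) (MvPowerSeries.coeff (R := A) μ g), h2⟩) →
      τ.σ m ⟨f, hf⟩ = τ.σ m ⟨g, hg⟩) :=
  ⟨fun _ hf hcoeff => τ.σ_eq_zero_of_σ_coeff_eq_zero 𝒜 hf fun μ => hcoeff μ _,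
    fun _ _ hf hg hcoeff => τ.σ_eq_of_σ_coeff_eq 𝒜 hf hg fun μ => hcoeff μ _ _⟩

open SCW in
/-- if all the coefficients of `f ∈ A_m` are sent to `0` by `σ_0` then
`σ_m(f) = 0`; consequently `σ_m` factors through the image of `𝒮^σ`
(Lemma-Definition 3.7). -/
theorem stmt12 {A : Type u} [CommRing A] (I : Ideal A) (hI : I ≠ ⊤) (𝒜 : SCPreWS A I)
    (K : Type u) [Field K] (O : ValuationSubring K) [HenselianLocalRing ↥O]
    (τ : AnalyticStructure I 𝒜.toSCFamily.Am K O) (m : ℕ) :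
    (∀ (f : MvPowerSeries ℕ A) (hf : f ∈ 𝒜.Am m),
      (∀ (μ : ℕ →₀ ℕ) (h : MvPowerSeries.C (σ := ℕ) (R := A) (MvPowerSeries.coeff (R := A) μ f) ∈ 𝒜.Am 0),
        τ.σ 0 ⟨MvPowerSeries.C (σ := ℕ) (R := A) (MvPowerSeries.coeff (R := A) μ f), h⟩ = 0) →
      τ.σ m ⟨f, hf⟩ = 0) ∧
    (∀ (f g : MvPowerSeries ℕ A) (hf : f ∈ 𝒜.Am m) (hg : g ∈ 𝒜.Am m),
      (∀ (μ : ℕ →₀ ℕ)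
        (h1 : MvPowerSeries.C (σ := ℕ) (R := A) (MvPowerSeries.coeff (R := A) μ f) ∈ 𝒜.Am 0)
        (h2 : MvPowerSeries.C (σ := ℕ) (R := A) (MvPowerSeries.coeff (R := A) μ g) ∈ 𝒜.Am 0),
        τ.σ 0 ⟨MvPowerSeries.C (σ := ℕ) (R := A) (MvPowerSeries.coeff (R := A) μ f), h1⟩ =
        τ.σ 0 ⟨MvPowerSeries.C (σ := ℕ) (R := A) (MvPowerSeries.coeff (R := A) μ g), h2⟩) →
      τ.σ m ⟨f, hf⟩ = τ.σ m ⟨g, hg⟩) :=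
  stmt12_general I 𝒜 K O τ m
end
end

section
/- Let 𝒜 = {A_m} be a strictly convergent (A,I)-pre-Weierstrass system and let σ be an analytic 𝒜-structure on a valued field K whose valuation ring is henselian and whose valuation is nontrivial. If f = Σ_μ a_μ ξ^μ ∈ A_m satisfies σ_m(f) = 0 (the zero function on (K°)^m), then σ_0(a_μ) = 0 for every μ ∈ ℕ^m. -/
noncomputable section
open scoped Classical
open MvPowerSeries

/-!
By weak Noetherianity and Weierstrass preparation in degree `0`, `f = ∑_{μ ∈ J} a_μ ξ^μ u_μ`
with `J` finite and `u_μ` units of `A_m`; so every coefficient of `f` lies in the ideal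
generated by the `a_μ`, and `0 = σ(f)(x) = ∑ σ₀(a_μ) x^μ σ(u_μ)(x)` with `|σ(u_μ)(x)| = 1`.
At the points `ξ_i = y ^ (t * B ^ i)`, with `y ≠ 0` in the maximal ideal and `B` larger than all
exponents, the monomial `x^μ` becomes `y ^ (t * N μ)` with `μ ↦ N μ` injective on `J`. For all
but finitely many `t` the nonzero terms then have pairwise distinct valuations, so they cannot
cancel, and every `σ₀(a_μ)` vanishes.
-/

section ValuedSums

variable {Γ₀ : Type*} [LinearOrderedCommGroupWithZero Γ₀]

theorem subsingleton_setOf_mul_pow_eq {γ : Γ₀} (hγ0 : γ ≠ 0) (hγ1 : γ ≠ 1) {a b : Γ₀}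
    (ha : a ≠ 0) (hb : b ≠ 0) {N N' : ℕ} (hN : N ≠ N') :
    {t : ℕ | a * γ ^ (t * N) = b * γ ^ (t * N')}.Subsingleton := by
  intro t ht t' ht'
  have hpow : γ ^ (t * N + t' * N') = γ ^ (t * N' + t' * N) := by
    apply mul_left_cancel₀ (mul_ne_zero ha hb)
    calc a * b * γ ^ (t * N + t' * N')
        = (a * γ ^ (t * N)) * (b * γ ^ (t' * N')) := by rw [pow_add]; ac_rfl
      _ = (b * γ ^ (t * N')) * (a * γ ^ (t' * N)) := by rw [ht, ← ht']
      _ = a * b * γ ^ (t * N' + t' * N) := by rw [pow_add]; ac_rfl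
  have hexp := pow_right_injective₀ (zero_lt_iff.2 hγ0) hγ1 hpow
  have hprod : ((t : ℤ) - t') * ((N : ℤ) - N') = 0 := by
    have : (t : ℤ) * N + t' * N' = t * N' + t' * N := by exact_mod_cast hexp
    linear_combination this
  rcases mul_eq_zero.1 hprod with h | h <;> omega

theorem exists_injOn_mul_pow {ι : Type*} {γ : Γ₀} (hγ0 : γ ≠ 0) (hγ1 : γ ≠ 1) {s : Finset ι}
    {a : ι → Γ₀} (ha : ∀ i ∈ s, a i ≠ 0) {N : ι → ℕ} (hN : Set.InjOn N s) :
    ∃ t : ℕ, Set.InjOn (fun i => a i * γ ^ (t * N i)) s := by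
  have hbad : (⋃ i ∈ s, ⋃ j ∈ s,
      {t : ℕ | i ≠ j ∧ a i * γ ^ (t * N i) = a j * γ ^ (t * N j)}).Finite := by
    refine s.finite_toSet.biUnion fun i hi => s.finite_toSet.biUnion fun j hj => ?_
    by_cases hij : i = j
    · simp [hij]
    · exact ((subsingleton_setOf_mul_pow_eq hγ0 hγ1 (ha i hi) (ha j hj)
        fun h => hij (hN hi hj h)).anti fun t ht => ht.2).finite
  obtain ⟨t, ht⟩ := hbad.infinite_compl.nonempty
  refine ⟨t, fun i hi j hj hij => by_contra fun hne => ht ?_⟩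
  simp only [Set.mem_iUnion]
  exact ⟨i, hi, j, hj, hne, hij⟩

variable {R ι : Type*}

theorem Valuation.sum_ne_zero_of_injOn [Ring R] (v : Valuation R Γ₀) {s : Finset ι}
    {f : ι → R} (hs : ∃ i ∈ s, v (f i) ≠ 0)
    (hinj : Set.InjOn (fun i => v (f i)) {i | i ∈ s ∧ v (f i) ≠ 0}) :
    ∑ i ∈ s, f i ≠ 0 := by
  obtain ⟨i₀, hi₀, hi₀0⟩ := hs
  obtain ⟨j, hj, hmax⟩ := s.exists_max_image (fun i => v (f i)) ⟨i₀, hi₀⟩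
  have hj0 : v (f j) ≠ 0 := ne_of_gt ((zero_lt_iff.2 hi₀0).trans_le (hmax i₀ hi₀))
  intro hsum
  refine hj0 ?_
  rw [← v.map_sum_eq_of_lt hj, hsum, map_zero]
  intro i hi
  obtain ⟨his, hij⟩ := Finset.mem_sdiff.1 hi
  refine (hmax i his).lt_of_ne fun heq => hij (Finset.mem_singleton.2 ?_)
  exact hinj ⟨his, heq ▸ hj0⟩ ⟨hj, hj0⟩ heq

/-- The exponents `t * N i` separate the values of the nonzero terms for all but finitely many
`t`, and then the ultrametric inequality forbids cancellation. -/
theorem Valuation.map_eq_zero_of_forall_sum_pow_mul_eq_zero [Ring R] (v : Valuation R Γ₀)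
    {y : R} (hy0 : v y ≠ 0) (hy1 : v y ≠ 1) {s : Finset ι} {N : ι → ℕ} (hN : Set.InjOn N s)
    (c : ι → R) (W : ℕ → ι → R) (hW : ∀ t, ∀ i ∈ s, v (W t i) = 1)
    (hsum : ∀ t, ∑ i ∈ s, c i * y ^ (t * N i) * W t i = 0) :
    ∀ i ∈ s, v (c i) = 0 := by
  by_contra! hc
  obtain ⟨t, ht⟩ := exists_injOn_mul_pow hy0 hy1 (s := s.filter fun i => v (c i) ≠ 0)
    (a := fun i => v (c i)) (fun i hi => (Finset.mem_filter.1 hi).2)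
    (hN.mono (Finset.filter_subset _ _))
  have hterm : ∀ i ∈ s, v (c i * y ^ (t * N i) * W t i) = v (c i) * v y ^ (t * N i) := by
    intro i hi
    rw [map_mul, map_mul, map_pow, hW t i hi, mul_one]
  refine v.sum_ne_zero_of_injOn ?_ ?_ (hsum t)
  · obtain ⟨i, hi, hi0⟩ := hc
    exact ⟨i, hi, by rw [hterm i hi]; exact mul_ne_zero hi0 (pow_ne_zero _ hy0)⟩
  · rintro i ⟨hi, hi0⟩ j ⟨hj, hj0⟩ hij
    rw [hterm i hi] at hi0
    rw [hterm j hj] at hj0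
    exact ht (Finset.mem_filter.2 ⟨hi, left_ne_zero_of_mul hi0⟩)
      (Finset.mem_filter.2 ⟨hj, left_ne_zero_of_mul hj0⟩)
      (by simpa only [hterm i hi, hterm j hj] using hij)

end ValuedSums

theorem ValuationSubring.eq_zero_of_forall_sum_pow_mul_eq_zero {K ι : Type*} [Field K]
    (O : ValuationSubring K) {y : O} (hy0 : y ≠ 0) (hy1 : y ∈ IsLocalRing.maximalIdeal O)
    {s : Finset ι} {N : ι → ℕ} (hN : Set.InjOn N s) (c : ι → O) (W : ℕ → ι → O)
    (hW : ∀ t, ∀ i ∈ s, IsUnit (W t i)) (hsum : ∀ t, ∑ i ∈ s, c i * y ^ (t * N i) * W t i = 0) :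
    ∀ i ∈ s, c i = 0 := by
  have hWv : ∀ t, ∀ i ∈ s, O.valuation.comap O.subtype (W t i) = 1 := fun t i hi => by
    obtain ⟨w, hw⟩ := hW t i hi
    rw [← hw]
    exact O.valuation_unit w
  intro i hi
  simpa using (O.valuation.comap O.subtype).map_eq_zero_of_forall_sum_pow_mul_eq_zero
    (by simpa using hy0) ((O.valuation_lt_one_iff y).1 hy1).ne hN c W hWv hsum i hi

theorem sum_mul_pow_injOn (m B : ℕ) :
    Set.InjOn (fun a : Fin m → ℕ => ∑ i, a i * B ^ (i : ℕ)) {a | ∀ i, a i < B} := by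
  intro a ha b hb hab
  have h := finFunctionFinEquiv.injective (a₁ := fun i => (⟨a i, ha i⟩ : Fin B))
    (a₂ := fun i => ⟨b i, hb i⟩) (Fin.ext (by simpa only [finFunctionFinEquiv_apply] using hab))
  funext i
  exact congrArg Fin.val (congrFun h i)

theorem exists_injOn_sum_mul_pow {m : ℕ} {J : Finset (ℕ →₀ ℕ)}
    (hJ : ∀ μ ∈ J, ∀ i ∈ μ.support, i < m) :
    ∃ B : ℕ, Set.InjOn (fun μ : ℕ →₀ ℕ => ∑ i : Fin m, μ i * B ^ (i : ℕ)) J := by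
  obtain ⟨B, hB⟩ : ∃ B, ∀ μ ∈ J, ∀ i : Fin m, μ i < B := by
    refine ⟨∑ μ ∈ J, ∑ i : Fin m, μ i + 1, fun μ hμ i => Nat.lt_succ_of_le ?_⟩
    calc μ i ≤ ∑ j : Fin m, μ j :=
          Finset.single_le_sum (f := fun j : Fin m => μ j) (fun _ _ => Nat.zero_le _)
            (Finset.mem_univ i)
      _ ≤ _ := Finset.single_le_sum (f := fun ν : ℕ →₀ ℕ => ∑ j : Fin m, ν j)
            (fun _ _ => Nat.zero_le _) hμ
  refine ⟨B, fun μ hμ ν hν hμν => ?_⟩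
  have h := sum_mul_pow_injOn m B (hB μ hμ) (hB ν hν) hμν
  ext i
  by_cases hi : i < m
  · exact congrFun h ⟨i, hi⟩
  · rw [Finsupp.notMem_support_iff.1 fun h => hi (hJ μ hμ i h),
      Finsupp.notMem_support_iff.1 fun h => hi (hJ ν hν i h)]

theorem prod_pow_mul_pow_pow {M : Type*} [CommMonoid M] (y : M) (t B : ℕ) {m : ℕ}
    (e : Fin m → ℕ) :
    ∏ i : Fin m, (y ^ (t * B ^ (i : ℕ))) ^ e i = y ^ (t * ∑ i : Fin m, e i * B ^ (i : ℕ)) := by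
  simp only [← pow_mul, Finset.prod_pow_eq_pow_sum, Finset.mul_sum]
  exact congrArg _ (Finset.sum_congr rfl fun i _ => by ring)

theorem MvPowerSeries.map_coeff_eq_zero_of_eq_sum_monomial_mul {σ R S : Type*} [CommRing R]
    [CommRing S] (φ : R →+* S) {J : Finset (σ →₀ ℕ)} {c : (σ →₀ ℕ) → R}
    {h : (σ →₀ ℕ) → MvPowerSeries σ R} {f : MvPowerSeries σ R}
    (hf : f = ∑ μ ∈ J, monomial μ (c μ) * h μ) (hc : ∀ μ ∈ J, φ (c μ) = 0) (ν : σ →₀ ℕ) :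
    φ (coeff ν f) = 0 := by
  rw [hf, map_sum, map_sum]
  refine Finset.sum_eq_zero fun μ hμ => ?_
  rw [coeff_monomial_mul]
  split_ifs
  · rw [map_mul, hc μ hμ, zero_mul]
  · exact map_zero φ

namespace SCW

variable {A : Type u} [CommRing A] {I : Ideal A}

theorem SCFamily.X_mem (𝒜 : SCFamily A I) {m i : ℕ} (hi : i < m) :
    (X i : MvPowerSeries ℕ A) ∈ 𝒜.Am m := by
  rw [← MvPolynomial.coe_X]
  refine 𝒜.poly_mem m _ fun j hj => ?_
  obtain ⟨d, hd, hjd⟩ := (MvPolynomial.mem_vars_iff_mem_support j).1 hj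
  rw [Finset.mem_singleton.1 (MvPolynomial.support_monomial_subset hd),
    Finsupp.mem_support_single] at hjd
  omega

def SCFamily.var (𝒜 : SCFamily A I) (m : ℕ) (i : Fin m) : 𝒜.Am m :=
  ⟨X i, 𝒜.X_mem i.2⟩

theorem SCFamily.monomial_eq_algebraMap_mul_prod_var (𝒜 : SCFamily A I) {m : ℕ}
    {μ : ℕ →₀ ℕ} (hμ : ∀ i ∈ μ.support, i < m) (a : A) :
    monomial μ a = ((algebraMap A (𝒜.Am m) a * ∏ i, 𝒜.var m i ^ μ i : 𝒜.Am m) :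
      MvPowerSeries ℕ A) := by
  simp only [Subalgebra.coe_mul, SubmonoidClass.coe_finsetProd, SubmonoidClass.coe_pow,
    Subalgebra.coe_algebraMap, SCFamily.var]
  rw [monomial_eq', c_eq_algebraMap, Fin.prod_univ_eq_prod_range (fun i => X i ^ μ i),
    Finsupp.prod_of_support_subset _ (fun i hi => Finset.mem_range.2 (hμ i hi))]
  exact fun _ _ => pow_zero _

theorem SCPreWS.isUnit_one_add (𝒜 : SCPreWS A I) {m : ℕ} (hm : 1 ≤ m) {g : MvPowerSeries ℕ A}
    (hg : g ∈ 𝒜.Am m) (hred : red I g = 0) :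
    IsUnit (⟨1 + g, add_mem (one_mem _) hg⟩ : 𝒜.Am m) := by
  have hreg : SCRegular I m 0 (1 + g) :=
    ⟨Fin.elim0, fun i => i.elim0, by rw [red, map_add, ← red, hred, add_zero, red, map_one]; simp⟩
  obtain ⟨⟨u, r⟩, ⟨-, ⟨w, hw, huw⟩, -, heq⟩, -⟩ :=
    𝒜.wprep 0 m hm _ (add_mem (one_mem _) hg) hreg
  simp only [pow_zero, Finset.univ_eq_empty, Finset.sum_empty, add_zero, mul_one] at heq
  exact IsUnit.of_mul_eq_one (⟨w, hw⟩ : 𝒜.Am m) (Subtype.ext (heq ▸ huw))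

/-- The factors `1 + g_μ` of the weak Noetherian decomposition are units by Weierstrass
preparation in degree `0`. -/
theorem SCPreWS.exists_eq_sum_monomial_mul_isUnit (𝒜 : SCPreWS A I) {m : ℕ} (hm : 1 ≤ m)
    {f : MvPowerSeries ℕ A} (hf : f ∈ 𝒜.Am m) :
    ∃ (J : Finset (ℕ →₀ ℕ)) (u : (ℕ →₀ ℕ) → 𝒜.Am m),
      (∀ μ ∈ J, (∀ i ∈ μ.support, i < m) ∧ IsUnit (u μ)) ∧
      f = ∑ μ ∈ J, monomial μ (coeff μ f) * u μ := by
  obtain ⟨J, g, hg, hfeq⟩ := 𝒜.wnp m f hf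
  let u : (ℕ →₀ ℕ) → 𝒜.Am m := fun μ =>
    if h : μ ∈ J then ⟨1 + g μ, add_mem (one_mem _) (hg μ h).1⟩ else 1
  have hu : ∀ μ ∈ J, (u μ : MvPowerSeries ℕ A) = 1 + g μ := fun μ h => by simp [u, h]
  refine ⟨J.filter fun μ => ∀ i ∈ μ.support, i < m, u, fun μ hμ => ?_, ?_⟩
  · obtain ⟨hμJ, hμ⟩ := Finset.mem_filter.1 hμ
    refine ⟨hμ, ?_⟩
    simpa [u, hμJ] using 𝒜.isUnit_one_add hm (hg μ hμJ).1 (hg μ hμJ).2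
  · have hsupp : ∀ μ ∈ J, monomial μ (coeff μ f) * (u μ : MvPowerSeries ℕ A) ≠ 0 →
        ∀ i ∈ μ.support, i < m := fun μ _ hne i hi => by
      by_contra! him
      exact hne (by rw [𝒜.varsBelow m f hf μ ⟨i, hi, him⟩, map_zero, zero_mul])
    rw [Finset.sum_filter_of_ne hsupp]
    exact hfeq.trans (Finset.sum_congr rfl fun μ hμ => by rw [hu μ hμ])

variable {Am : ℕ → Subalgebra A (MvPowerSeries ℕ A)} {K : Type v} [Field K]
  {O : ValuationSubring K}

/-- `a ↦ σ₀(a) : A → K°`. -/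
def AnalyticStructure.constHom (τ : AnalyticStructure I Am K O) : A →+* O :=
  (Pi.evalRingHom (fun _ : Fin 0 → O => O) Fin.elim0).comp ((τ.σ 0).comp (algebraMap A (Am 0)))

theorem AnalyticStructure.σ_algebraMap (τ : AnalyticStructure I Am K O) (a : A) :
    ∀ (k : ℕ) (x : Fin k → O), τ.σ k (algebraMap A (Am k) a) x = τ.constHom a
  | 0, x => by rw [Subsingleton.elim x Fin.elim0]; rfl
  | k + 1, x => (τ.cond3 k _ (Subalgebra.algebraMap_mem _ a) _ x).trans
      (τ.σ_algebraMap a k _)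

theorem AnalyticStructure.σ_zero_C (τ : AnalyticStructure I Am K O) (a : A)
    (h : C a ∈ Am 0) : τ.σ 0 ⟨C a, h⟩ = fun _ => τ.constHom a := by
  funext x
  rw [← τ.σ_algebraMap a 0 x]
  congr 1

variable {𝒜 : SCFamily A I}

theorem AnalyticStructure.σ_eq_sum_of_eq_sum_monomial_mul
    (τ : AnalyticStructure I 𝒜.Am K O) {m : ℕ} {J : Finset (ℕ →₀ ℕ)} {c : (ℕ →₀ ℕ) → A}
    {u : (ℕ →₀ ℕ) → 𝒜.Am m} (hJ : ∀ μ ∈ J, ∀ i ∈ μ.support, i < m) {f : MvPowerSeries ℕ A}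
    (hf : f ∈ 𝒜.Am m) (hfeq : f = ∑ μ ∈ J, monomial μ (c μ) * u μ) (x : Fin m → O) :
    τ.σ m ⟨f, hf⟩ x = ∑ μ ∈ J, τ.constHom (c μ) * (∏ i, x i ^ μ i) * τ.σ m (u μ) x := by
  have hsub : (⟨f, hf⟩ : 𝒜.Am m) =
      ∑ μ ∈ J, algebraMap A (𝒜.Am m) (c μ) * (∏ i, 𝒜.var m i ^ μ i) * u μ := by
    refine Subtype.ext (hfeq.trans ?_)
    simp only [AddSubmonoidClass.coe_finsetSum, Subalgebra.coe_mul]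
    refine Finset.sum_congr rfl fun μ hμ => ?_
    rw [𝒜.monomial_eq_algebraMap_mul_prod_var (hJ μ hμ), Subalgebra.coe_mul]
  have hvar : ∀ i, τ.σ m (𝒜.var m i) x = x i := fun i => τ.cond2 m i i.2 _ x
  simp only [hsub, map_sum, map_mul, map_prod, map_pow, Finset.sum_apply, Pi.mul_apply,
    Finset.prod_apply, Pi.pow_apply, hvar, τ.σ_algebraMap]

end SCW

open SCW in
theorem stmt13_general {A : Type u} [CommRing A] (I : Ideal A) (𝒜 : SCPreWS A I)
    (K : Type u) [Field K] (O : ValuationSubring K)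
    (hnontriv : ∃ y : ↥O, y ≠ 0 ∧ y ∈ IsLocalRing.maximalIdeal ↥O)
    (τ : AnalyticStructure I 𝒜.toSCFamily.Am K O) (m : ℕ)
    (f : MvPowerSeries ℕ A) (hf : f ∈ 𝒜.Am m) (hσ : τ.σ m ⟨f, hf⟩ = 0) :
    ∀ (μ : ℕ →₀ ℕ) (h : MvPowerSeries.C (σ := ℕ) (R := A) (MvPowerSeries.coeff (R := A) μ f) ∈ 𝒜.Am 0),
      τ.σ 0 ⟨MvPowerSeries.C (σ := ℕ) (R := A) (MvPowerSeries.coeff (R := A) μ f), h⟩ = 0 := by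
  obtain ⟨y, hy0, hy1⟩ := hnontriv
  have hf' : f ∈ 𝒜.Am (m + 1) := 𝒜.mono m.le_succ hf
  obtain ⟨J, u, hJ, hfeq⟩ := 𝒜.exists_eq_sum_monomial_mul_isUnit (Nat.le_add_left 1 m) hf'
  obtain ⟨B, hN⟩ := exists_injOn_sum_mul_pow fun μ hμ => (hJ μ hμ).1
  let x : ℕ → Fin (m + 1) → O := fun t i => y ^ (t * B ^ (i : ℕ))
  have hsum : ∀ t, ∑ μ ∈ J, τ.constHom (coeff μ f) * y ^ (t * ∑ i : Fin (m + 1), μ i * B ^ (i : ℕ))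
      * τ.σ (m + 1) (u μ) (x t) = 0 := fun t => by
    have h := τ.σ_eq_sum_of_eq_sum_monomial_mul (fun μ hμ => (hJ μ hμ).1) hf' hfeq (x t)
    rw [τ.cond3 m f hf hf', hσ] at h
    simpa only [x, prod_pow_mul_pow_pow, Pi.zero_apply] using h.symm
  have hJ0 := O.eq_zero_of_forall_sum_pow_mul_eq_zero hy0 hy1 hN _ _
    (fun t μ hμ => ((hJ μ hμ).2.map (τ.σ (m + 1))).map (Pi.evalRingHom _ (x t))) hsum
  intro ν h
  rw [τ.σ_zero_C]
  funext
  exact map_coeff_eq_zero_of_eq_sum_monomial_mul τ.constHom hfeq hJ0 ν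

open SCW in
/-- over a henselian field with nontrivial valuation, `σ_m(f) = 0` implies
that all the coefficients of `f` are sent to `0` by `σ_0` (Remark 3.8 a)). -/
theorem stmt13 {A : Type u} [CommRing A] (I : Ideal A) (hI : I ≠ ⊤) (𝒜 : SCPreWS A I)
    (K : Type u) [Field K] (O : ValuationSubring K) [HenselianLocalRing ↥O]
    (hnontriv : ∃ y : ↥O, y ≠ 0 ∧ y ∈ IsLocalRing.maximalIdeal ↥O)
    (τ : AnalyticStructure I 𝒜.toSCFamily.Am K O) (m : ℕ)
    (f : MvPowerSeries ℕ A) (hf : f ∈ 𝒜.Am m) (hσ : τ.σ m ⟨f, hf⟩ = 0) :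
    ∀ (μ : ℕ →₀ ℕ) (h : MvPowerSeries.C (σ := ℕ) (R := A) (MvPowerSeries.coeff (R := A) μ f) ∈ 𝒜.Am 0),
      τ.σ 0 ⟨MvPowerSeries.C (σ := ℕ) (R := A) (MvPowerSeries.coeff (R := A) μ f), h⟩ = 0 :=
  stmt13_general I 𝒜 K O hnontriv τ m f hf hσ
end
end
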